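/- Let v : [0,∞) × ℝ → ℝ and define its 5-lift ṽ : ℝ⁵ → ℝ by ṽ(x₁,…,x₅) := v((x₁² + x₂² + x₃² + x₄²)^{1/2}, x₅). If v is C¹ on [0,∞) × ℝ and ∂_ρ v(ρ, z) → 0 as ρ → 0 (locally uniformly in z), then ṽ ∈ C¹(ℝ⁵). -/

import Mathlib

/-!
Write the lift as `w ∘ T`, where `T x = ((x₁, …, x₄), x₅)` is linear and `w (y, z) = v (‖y‖, z)`
on `F × G` for a real inner product space `F`. Off the axis `y = 0` the norm is smooth and the
chain rule applies. At `(0, z)`, composing the first-order expansion of `v` within the half-plane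
with `(y, z') ↦ (‖y‖, z')` gives an expansion of `w`, because `∂ρ v (0, z) = 0` kills the
non-differentiable `‖y‖`. The derivative is continuous at the axis since `∂ρ v (‖y‖, z) → 0`
there while the derivative of the norm has norm at most `1`.
-/

/-- The 5-lift of a function on the meridian half-plane. -/
noncomputable def lift5 (v : ℝ × ℝ → ℝ) (x : EuclideanSpace ℝ (Fin 5)) : ℝ :=
  v (Real.sqrt ((x 0)^2 + (x 1)^2 + (x 2)^2 + (x 3)^2), x 4)

open Set Filter Topology Asymptotics ContinuousLinearMap

section NormLift

variable {F G H : Type*} [NormedAddCommGroup F] [InnerProductSpace ℝ F]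
  [NormedAddCommGroup G] [NormedSpace ℝ G] [NormedAddCommGroup H] [NormedSpace ℝ H]
  {v : ℝ × G → H}

/- At `q.1 = 0` the factor `fderiv ℝ norm 0` is a junk value; it only ever meets the radial
derivative `∂ρ v (0, z)`, which vanishes. -/
noncomputable def normLiftDeriv (v : ℝ × G → H) (q : F × G) : F × G →L[ℝ] H :=
  (fderivWithin ℝ v (Ici 0 ×ˢ univ) (‖q.1‖, q.2)).comp
    (((fderiv ℝ norm q.1).comp (fst ℝ F G)).prod (snd ℝ F G))

theorem hasFDerivAt_normLift_of_fst_ne_zero (hv : ContDiffOn ℝ 1 v (Ici 0 ×ˢ univ)) {q : F × G}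
    (hq : q.1 ≠ 0) :
    HasFDerivAt (fun p : F × G => v (‖p.1‖, p.2)) (normLiftDeriv v q) q := by
  have hS : Ici (0 : ℝ) ×ˢ (univ : Set G) ∈ 𝓝 (‖q.1‖, q.2) :=
    prod_mem_nhds (Ici_mem_nhds (norm_pos_iff.2 hq)) univ_mem
  have hvq : HasFDerivAt v (fderivWithin ℝ v (Ici 0 ×ˢ univ) (‖q.1‖, q.2)) (‖q.1‖, q.2) := by
    rw [fderivWithin_of_mem_nhds hS]
    exact ((hv.contDiffAt hS).differentiableAt one_ne_zero).hasFDerivAt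
  have hnorm : HasFDerivAt norm (fderiv ℝ norm q.1) q.1 :=
    ((contDiffAt_norm ℝ hq).differentiableAt one_ne_zero).hasFDerivAt
  exact hvq.comp q ((hnorm.comp q hasFDerivAt_fst).prodMk hasFDerivAt_snd)

theorem hasFDerivAt_normLift_axis (hv : ContDiffOn ℝ 1 v (Ici 0 ×ˢ univ)) {z : G}
    (hz : fderivWithin ℝ v (Ici 0 ×ˢ univ) (0, z) (1, 0) = 0) :
    HasFDerivAt (fun p : F × G => v (‖p.1‖, p.2)) (normLiftDeriv v (0, z)) (0, z) := by
  set D := fderivWithin ℝ v (Ici 0 ×ˢ univ) (0, z)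
  have hvD : HasFDerivWithinAt v D (Ici 0 ×ˢ univ) (0, z) :=
    (hv.differentiableOn one_ne_zero (0, z) ⟨mem_Ici.2 le_rfl, trivial⟩).hasFDerivWithinAt
  have hD : ∀ a b, D (a, b) = D (0, b) := fun a b => by
    rw [show ((a, b) : ℝ × G) = a • ((1 : ℝ), (0 : G)) + (0, b) by simp, map_add, map_smul, hz,
      smul_zero, zero_add]
  have hφ : Tendsto (fun q : F × G => ((‖q.1‖, q.2) : ℝ × G)) (𝓝 (0, z))
      (𝓝[Ici 0 ×ˢ univ] (0, z)) :=
    tendsto_nhdsWithin_iff.2 ⟨Continuous.tendsto' (by fun_prop) _ _ (by simp),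
      Eventually.of_forall fun q => ⟨norm_nonneg _, trivial⟩⟩
  refine HasFDerivAt.of_isLittleO <|
    ((hvD.isLittleO.comp_tendsto hφ).trans_isBigO (isBigO_of_le _ fun q => ?_)).congr_left
      fun q => ?_
  · simp [Prod.norm_def]
  · simp [normLiftDeriv, D, hD]

theorem continuous_normLiftDeriv (hv : ContDiffOn ℝ 1 v (Ici 0 ×ˢ univ))
    (h0 : ∀ z, fderivWithin ℝ v (Ici 0 ×ˢ univ) (0, z) (1, 0) = 0) :
    Continuous (normLiftDeriv (F := F) v) := by
  set D : F × G → ℝ × G →L[ℝ] H := fun q => fderivWithin ℝ v (Ici 0 ×ˢ univ) (‖q.1‖, q.2)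
  have hD : Continuous D :=
    (hv.continuousOn_fderivWithin ((uniqueDiffOn_Ici 0).prod uniqueDiffOn_univ)
      le_rfl).comp_continuous (by fun_prop) fun q => ⟨norm_nonneg _, trivial⟩
  have hsplit : normLiftDeriv v = fun q : F × G =>
      ((D q).comp (inl ℝ ℝ G)).comp ((fderiv ℝ norm q.1).comp (fst ℝ F G)) +
        ((D q).comp (inr ℝ ℝ G)).comp (snd ℝ F G) := by
    ext q p <;> simp [normLiftDeriv, D, ← map_add]
  rw [hsplit]
  refine Continuous.add (continuous_iff_continuousAt.2 fun ⟨y, z⟩ => ?_)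
    ((hD.clm_comp continuous_const).clm_comp continuous_const)
  rcases eq_or_ne y 0 with rfl | hy
  · have hzero : (D (0, z)).comp (inl ℝ ℝ G) = 0 := by
      ext; simpa [D] using h0 z
    have hlim : Tendsto (fun q => (D q).comp (inl ℝ ℝ G)) (𝓝 (0, z)) (𝓝 0) :=
      hzero ▸ (hD.clm_comp continuous_const).tendsto (0, z)
    have hN : ∀ y : F, ‖(fderiv ℝ norm y).comp (fst ℝ F G)‖ ≤ 1 := fun y =>
      (opNorm_comp_le _ _).trans <| mul_le_one₀
        ((norm_fderiv_le_of_lipschitz ℝ lipschitzWith_one_norm).trans_eq NNReal.coe_one)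
        (norm_nonneg _) (norm_fst_le ℝ F G)
    rw [ContinuousAt, hzero, zero_comp]
    exact squeeze_zero_norm
      (fun q => (opNorm_comp_le ((D q).comp (inl ℝ ℝ G)) _).trans
        (mul_le_of_le_one_right (norm_nonneg _) (hN q.1)))
      (tendsto_zero_iff_norm_tendsto_zero.1 hlim)
  · exact (hD.continuousAt.clm_comp continuousAt_const).clm_comp
      ((((contDiffAt_norm ℝ hy).continuousAt_fderiv one_ne_zero).comp continuousAt_fst).clm_comp
        continuousAt_const)

theorem contDiff_normLift (hv : ContDiffOn ℝ 1 v (Ici 0 ×ˢ univ))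
    (h0 : ∀ z, fderivWithin ℝ v (Ici 0 ×ˢ univ) (0, z) (1, 0) = 0) :
    ContDiff ℝ 1 (fun p : F × G => v (‖p.1‖, p.2)) := by
  refine contDiff_one_iff_hasFDerivAt.2 ⟨_, continuous_normLiftDeriv hv h0, fun ⟨y, z⟩ => ?_⟩
  rcases eq_or_ne y 0 with rfl | hy
  · exact hasFDerivAt_normLift_axis hv (h0 z)
  · exact hasFDerivAt_normLift_of_fst_ne_zero hv hy

end NormLift

theorem lift5_C1
    (v : ℝ × ℝ → ℝ)
    (hv : ContDiffOn ℝ 1 v (Set.Ici (0:ℝ) ×ˢ (Set.univ : Set ℝ)))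
    (hax : ∀ z₀ : ℝ, ∀ ε > (0:ℝ), ∃ δ > (0:ℝ), ∀ ρ z : ℝ, 0 ≤ ρ → ρ < δ → |z - z₀| < δ →
      |fderivWithin ℝ v (Set.Ici (0:ℝ) ×ˢ (Set.univ : Set ℝ)) (ρ, z) (1, 0)| < ε) :
    ContDiff ℝ 1 (lift5 v) := by
  have h0 : ∀ z, fderivWithin ℝ v (Ici 0 ×ˢ univ) (0, z) (1, 0) = 0 := fun z => by
    by_contra hne
    obtain ⟨δ, hδ, hsmall⟩ := hax z _ (abs_pos.2 hne)
    exact (hsmall 0 z le_rfl hδ (by simpa using hδ)).false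
  have hT : ContDiff ℝ 1 fun x : EuclideanSpace ℝ (Fin 5) =>
      (WithLp.toLp 2 fun i : Fin 4 => x i.castSucc, x 4) := by fun_prop
  have hlift : lift5 v = (fun p : EuclideanSpace ℝ (Fin 4) × ℝ => v (‖p.1‖, p.2)) ∘
      fun x : EuclideanSpace ℝ (Fin 5) => (WithLp.toLp 2 fun i : Fin 4 => x i.castSucc, x 4) := by
    ext x
    simp [lift5, EuclideanSpace.norm_eq, Fin.sum_univ_four]
  rw [hlift]
  exact (contDiff_normLift hv h0).comp hT
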